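/- Let G be a graph on ten vertices such that both G and its complement are minimally t-imperfect, with the standard 10-vertex labeling. Then for every i ∈ {1,…,5} (indices mod 5), at least one of u_iu_{i−1} and u_iu_{i+1} is an edge of G. -/

import Mathlib

open SimpleGraph

namespace TP

/-- A set of vertices is independent: no two of its vertices are adjacent. -/
def IsIndep {V : Type*} (G : SimpleGraph V) (S : Set V) : Prop :=
  S.Pairwise fun u v => ¬ G.Adj u v

/-- The finite vertex set `s` induces a cycle of length `n` in `G`. -/
def IsInducedCycle {V : Type*} (G : SimpleGraph V) (n : ℕ) (s : Finset V) : Prop :=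
  3 ≤ n ∧ s.card = n ∧ Nonempty (G.induce (s : Set V) ≃g SimpleGraph.cycleGraph n)

/-- The polytope `P(G)` given by nonnegativity, edge and odd-cycle inequalities. -/
def tPolytope {V : Type*} [Fintype V] (G : SimpleGraph V) : Set (V → ℝ) :=
  {x | (∀ v, 0 ≤ x v ∧ x v ≤ 1) ∧
    (∀ ⦃u v⦄, G.Adj u v → x u + x v ≤ 1) ∧
    (∀ (n : ℕ) (s : Finset V), Odd n → IsInducedCycle G n s →
      ∑ v ∈ s, x v ≤ ((n : ℝ) - 1) / 2)}

/-- The independent set polytope: the convex hull of characteristic vectors of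
independent sets. -/
def stabPolytope {V : Type*} [Fintype V] (G : SimpleGraph V) : Set (V → ℝ) :=
  convexHull ℝ {x | ∃ S : Set V, IsIndep G S ∧ x = S.indicator fun _ => (1 : ℝ)}

/-- A graph is t-perfect if `P(G)` equals its independent set polytope. -/
def TPerfect {V : Type*} [Fintype V] (G : SimpleGraph V) : Prop :=
  tPolytope G = stabPolytope G

/-- The graph obtained from `G` by a t-contraction at `v` : the closed neighbourhood
of `v` is replaced by a single new vertex (`none`), adjacent to every vertex that had
a neighbour in the closed neighbourhood of `v`. -/
def tContract {V : Type*} (G : SimpleGraph V) (v : V) :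
    SimpleGraph (Option {w : V // w ≠ v ∧ ¬ G.Adj v w}) :=
  SimpleGraph.fromRel fun a b =>
    match a, b with
    | some a, some b => G.Adj a.1 b.1
    | some a, none => ∃ x, (x = v ∨ G.Adj v x) ∧ G.Adj a.1 x
    | none, _ => False

/-- A bundled finite simple graph. -/
structure FinGraph : Type 1 where
  V : Type
  [fintype : Fintype V]
  graph : SimpleGraph V

attribute [instance] FinGraph.fintype

def FinGraph.of {V : Type} [Fintype V] (G : SimpleGraph V) : FinGraph :=
  FinGraph.mk V G

/-- `B` is obtained from `A` by deleting one vertex (up to isomorphism). -/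
def DeleteStep (A B : FinGraph) : Prop :=
  ∃ v : A.V, Nonempty (B.graph ≃g A.graph.induce {w | w ≠ v})

/-- `B` is obtained from `A` by a t-contraction at a vertex whose neighbourhood is
independent (up to isomorphism). -/
def ContractStep (A B : FinGraph) : Prop :=
  ∃ v : A.V, IsIndep A.graph (A.graph.neighborSet v) ∧
    Nonempty (B.graph ≃g tContract A.graph v)

/-- One step: a vertex deletion or a t-contraction. -/
def Step (A B : FinGraph) : Prop := DeleteStep A B ∨ ContractStep A B

/-- `TMinor B A` : `B` is a t-minor of `A`, i.e. obtained from `A` by a sequence of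
vertex deletions and t-contractions. -/
def TMinor (B A : FinGraph) : Prop := Relation.ReflTransGen Step A B

/-- `B` is a proper t-minor of `A` : a t-minor with fewer vertices. -/
def ProperTMinor (B A : FinGraph) : Prop :=
  TMinor B A ∧ Fintype.card B.V < Fintype.card A.V

/-- A graph is minimally t-imperfect if it is not t-perfect but every proper t-minor
of it is t-perfect. -/
def MinimallyTImperfect {V : Type} [Fintype V] (G : SimpleGraph V) : Prop :=
  ¬ TPerfect G ∧ ∀ B : FinGraph, ProperTMinor B (FinGraph.of G) → TPerfect B.graph

/-- A core graph: every proper t-minor of `G` and every proper t-minor of its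
complement is t-perfect. -/
def IsCore {V : Type} [Fintype V] (G : SimpleGraph V) : Prop :=
  (∀ B : FinGraph, ProperTMinor B (FinGraph.of G) → TPerfect B.graph) ∧
  (∀ B : FinGraph, ProperTMinor B (FinGraph.of Gᶜ) → TPerfect B.graph)

/-- A partition of `V \ {v}` into `count` sets of size `size`, all satisfying `P`. -/
def CoverOff {V : Type*} (v : V) (count size : ℕ) (P : Finset V → Prop) : Prop :=
  ∃ f : Fin count → Finset V,
    (∀ i, P (f i) ∧ (f i).card = size) ∧
    (∀ i j, i ≠ j → Disjoint (f i) (f j)) ∧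
    (∀ i, v ∉ f i) ∧
    (∀ w, w ≠ v → ∃ i, w ∈ f i)

/-- `(p,q)`-partitionable graphs. -/
def PQPartitionable {V : Type*} [Fintype V] (G : SimpleGraph V) (p q : ℕ) : Prop :=
  2 ≤ p ∧ 2 ≤ q ∧ Fintype.card V = p * q + 1 ∧
  ∀ v : V,
    CoverOff v q p (fun S => IsIndep G (S : Set V)) ∧
    CoverOff v p q (fun S => G.IsClique (S : Set V))

/-- `G` has an odd hole: an induced odd cycle of length at least five. -/
def HasOddHole {V : Type*} (G : SimpleGraph V) : Prop :=
  ∃ (n : ℕ) (s : Finset V), Odd n ∧ 5 ≤ n ∧ IsInducedCycle G n s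

/-- A graph is perfect iff neither it nor its complement has an odd hole. -/
def GPerfect {V : Type*} (G : SimpleGraph V) : Prop :=
  ¬ HasOddHole G ∧ ¬ HasOddHole Gᶜ

/-- Every vertex has degree at least three and at most five. -/
def DegreeBounded {V : Type*} (G : SimpleGraph V) : Prop :=
  ∀ v, 3 ≤ (G.neighborSet v).ncard ∧ (G.neighborSet v).ncard ≤ 5

/-- The `n`-wheel: an `n`-cycle plus a vertex (`none`) adjacent to every cycle vertex. -/
def wheel (n : ℕ) : SimpleGraph (Option (Fin n)) :=
  SimpleGraph.fromRel fun a b =>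
    match a, b with
    | some i, some j => (SimpleGraph.cycleGraph n).Adj i j
    | none, some _ => True
    | _, none => False

/-- Vertex type of the standard 9-vertex labeling: `inl i` is `v_{i+1}`,
`inr j` is `u_{j+1}`. -/
abbrev V9 := Fin 5 ⊕ Fin 4

/-- Vertex type of the standard 10-vertex labeling. -/
abbrev V10 := Fin 5 ⊕ Fin 5

/-- The standard 9-vertex labeling: `v1 … v5` form a 5-hole; the neighbours of `u_i`
among the `v`'s are `v_{i+2}` and `v_{i+3}` together possibly with `v_i`. -/
def Std9 (G : SimpleGraph V9) : Prop :=
  (∀ i j : Fin 5, G.Adj (.inl i) (.inl j) ↔ (j = i + 1 ∨ i = j + 1)) ∧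
  (∀ (i : Fin 4) (k : Fin 5), G.Adj (.inr i) (.inl k) →
    k = i.castSucc + 2 ∨ k = i.castSucc + 3 ∨ k = i.castSucc) ∧
  (∀ i : Fin 4, G.Adj (.inr i) (.inl (i.castSucc + 2)) ∧ G.Adj (.inr i) (.inl (i.castSucc + 3)))

/-- The standard 10-vertex labeling. -/
def Std10 (G : SimpleGraph V10) : Prop :=
  (∀ i j : Fin 5, G.Adj (.inl i) (.inl j) ↔ (j = i + 1 ∨ i = j + 1)) ∧
  (∀ (i k : Fin 5), G.Adj (.inr i) (.inl k) → k = i + 2 ∨ k = i + 3 ∨ k = i) ∧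
  (∀ i : Fin 5, G.Adj (.inr i) (.inl (i + 2)) ∧ G.Adj (.inr i) (.inl (i + 3)))

/-- The 9-vertex graph of the standard labeling with prescribed `U`-edges and
prescribed extra edges `u_i v_i`. -/
def graph9 (uEdges : List (Fin 4 × Fin 4)) (extra : List (Fin 4)) : SimpleGraph V9 :=
  SimpleGraph.fromRel fun a b =>
    match a, b with
    | .inl i, .inl j => j = i + 1
    | .inr i, .inl k => k = i.castSucc + 2 ∨ k = i.castSucc + 3 ∨ (i ∈ extra ∧ k = i.castSucc)
    | .inl _, .inr _ => False
    | .inr i, .inr j => (i, j) ∈ uEdges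

/-- The 10-vertex graph of the standard labeling with prescribed `U`-edges and
prescribed extra edges `u_i v_i`. -/
def graph10 (uEdges : List (Fin 5 × Fin 5)) (extra : List (Fin 5)) : SimpleGraph V10 :=
  SimpleGraph.fromRel fun a b =>
    match a, b with
    | .inl i, .inl j => j = i + 1
    | .inr i, .inl k => k = i + 2 ∨ k = i + 3 ∨ (i ∈ extra ∧ k = i)
    | .inl _, .inr _ => False
    | .inr i, .inr j => (i, j) ∈ uEdges

/-- The graph `(12°435°1)`. -/
def G12435 : SimpleGraph V10 :=
  graph10 [(0,1),(1,3),(3,2),(2,4),(4,0)] [1,4]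

/-- The graph `(1°2°435°1°)`. -/
def G12435' : SimpleGraph V10 :=
  graph10 [(0,1),(1,3),(3,2),(2,4),(4,0)] [0,1,4]

/-!
Suppose `u_i` is adjacent to neither `u_{i-1}` nor `u_{i+1}`; after rotating the labels,
`i = 0`. Then `G` is `graph10 u e` for a set `u` of edges among the eight remaining pairs of
`U` and a set `e` of extra edges `u_jv_j`. In each of these `2^13` graphs, `G` or `Gᶜ` has seven
vertices spanning no independent triple; ten such 7-sets, found by computer, cover all cases.
A 7-vertex graph `H` with `α(H) ≤ 2` is not t-perfect: the constant vector `1/3` lies in `P(H)`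
but has weight `7/3 > α(H)`. As an induced subgraph it is a proper t-minor of `G` or of `Gᶜ`,
contradicting minimal t-imperfection.
-/

section TPerfection

variable {V : Type*} [Fintype V]

theorem const_mem_tPolytope (H : SimpleGraph V) : (fun _ => (1 : ℝ) / 3) ∈ tPolytope H := by
  refine ⟨fun _ => by norm_num, fun _ _ _ => by norm_num, fun n s _ hs => ?_⟩
  rw [Finset.sum_const, hs.2.1, nsmul_eq_mul]
  have : (3 : ℝ) ≤ n := by exact_mod_cast hs.1
  linarith

theorem sum_le_of_mem_stabPolytope {H : SimpleGraph V} {k : ℕ}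
    (hk : ∀ T, IsIndep H T → T.ncard ≤ k) {x : V → ℝ} (hx : x ∈ stabPolytope H) :
    ∑ v, x v ≤ k := by
  classical
  refine convexHull_min ?_ (convex_halfSpace_le ?_ (k : ℝ)) hx
  · rintro _ ⟨T, hT, rfl⟩
    have hcard : ∑ v, T.indicator (fun _ => (1 : ℝ)) v = T.ncard := by
      simp [Set.indicator_apply, Finset.sum_boole, Set.ncard_eq_toFinset_card']
    simpa [hcard] using hk T hT
  · exact ⟨fun _ _ => Finset.sum_add_distrib, fun _ _ => by simp [Finset.mul_sum]⟩

theorem not_tPerfect_of_indep_ncard_le (H : SimpleGraph V) (k : ℕ)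
    (hk : ∀ T, IsIndep H T → T.ncard ≤ k) (hcard : 3 * k < Fintype.card V) : ¬ TPerfect H := by
  intro hH
  have hsum := sum_le_of_mem_stabPolytope hk (hH ▸ const_mem_tPolytope H)
  have hcard' : (3 * k : ℝ) < Fintype.card V := by exact_mod_cast hcard
  simp only [Finset.sum_const, Finset.card_univ, nsmul_eq_mul] at hsum
  linarith

end TPerfection

def induceInduceIso {V : Type*} (G : SimpleGraph V) {S T : Set V} (h : S ⊆ T) :
    G.induce S ≃g (G.induce T).induce (Subtype.val ⁻¹' S) where
  toFun x := ⟨⟨x.1, h x.2⟩, x.2⟩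
  invFun x := ⟨x.1.1, x.2⟩
  left_inv _ := rfl
  right_inv _ := rfl
  map_rel_iff' := Iff.rfl

theorem TMinor.of_iso_induce {A B : FinGraph} {S : Set A.V} (hS : S ≠ Set.univ)
    (e : B.graph ≃g A.graph.induce S) : TMinor B A := by
  classical
  obtain ⟨n, hn⟩ : ∃ n, Sᶜ.ncard = n + 1 :=
    Nat.exists_eq_succ_of_ne_zero (by rwa [Ne, Set.ncard_eq_zero, Set.compl_empty_iff])
  clear hS
  induction n generalizing A B S with
  | zero =>
    obtain ⟨v, hv⟩ := Set.ncard_eq_one.1 hn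
    obtain rfl : S = {w | w ≠ v} := by rw [← compl_compl S, hv]; rfl
    exact .single (Or.inl ⟨v, ⟨e⟩⟩)
  | succ n ih =>
    obtain ⟨v, hv⟩ : Sᶜ.Nonempty := Set.nonempty_of_ncard_ne_zero (by omega)
    have hSv : S ⊆ {w | w ≠ v} := fun w hw hwv => hv (hwv ▸ hw)
    let A' := FinGraph.of (A.graph.induce {w | w ≠ v})
    have hstep : Step A A' := Or.inl ⟨v, ⟨Iso.refl⟩⟩
    have hn' : (Subtype.val ⁻¹' S : Set {w | w ≠ v})ᶜ.ncard = n + 1 := by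
      have himg : Subtype.val '' (Subtype.val ⁻¹' S : Set {w | w ≠ v})ᶜ = Sᶜ \ {v} := by
        ext w
        simp only [Set.mem_image, Set.mem_compl_iff, Set.mem_preimage, Set.mem_sdiff,
          Set.mem_singleton_iff]
        exact ⟨fun ⟨x, hx, hxw⟩ => hxw ▸ ⟨hx, x.2⟩, fun ⟨hw, hwv⟩ => ⟨⟨w, hwv⟩, hw, rfl⟩⟩
      rw [← Set.ncard_image_of_injective _ Subtype.val_injective, himg,
        Set.ncard_sdiff_singleton_of_mem hv, hn]
      rfl
    exact .head hstep (ih (A := A') (e.trans (induceInduceIso A.graph hSv)) hn')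

theorem properTMinor_of_iso_induce {A B : FinGraph} {S : Set A.V} (hS : S ≠ Set.univ)
    (e : B.graph ≃g A.graph.induce S) : ProperTMinor B A := by
  classical
  refine ⟨.of_iso_induce hS e, ?_⟩
  rw [Fintype.card_congr e.toEquiv]
  obtain ⟨x, hx⟩ := (Set.ne_univ_iff_exists_notMem S).1 hS
  exact Fintype.card_subtype_lt hx

theorem not_forall_tPerfect_of_indep_ncard_le {V : Type} [Fintype V] (H : SimpleGraph V)
    {S : Set V} (hS : S ≠ Set.univ) (k : ℕ) (hk : 3 * k < S.ncard)
    (hα : ∀ T ⊆ S, IsIndep H T → T.ncard ≤ k) :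
    ¬ ∀ B : FinGraph, ProperTMinor B (FinGraph.of H) → TPerfect B.graph := by
  classical
  intro h
  refine not_tPerfect_of_indep_ncard_le (H.induce S) k (fun T hT => ?_) ?_
    (h (FinGraph.of (H.induce S)) (properTMinor_of_iso_induce hS .refl))
  · rw [← Set.ncard_image_of_injective T Subtype.val_injective]
    refine hα _ (by simp) ?_
    rintro _ ⟨x, hx, rfl⟩ _ ⟨y, hy, rfl⟩ hne
    exact hT hx hy (ne_of_apply_ne _ hne)
  · rwa [← Nat.card_coe_set_eq, Nat.card_eq_fintype_card] at hk

section IndepTriples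

variable {V : Type*}

def TripleHasEdge (H : SimpleGraph V) (t : V × V × V) : Prop :=
  H.Adj t.1 t.2.1 ∨ H.Adj t.1 t.2.2 ∨ H.Adj t.2.1 t.2.2

instance (H : SimpleGraph V) [DecidableRel H.Adj] : DecidablePred (TripleHasEdge H) :=
  fun _ => inferInstanceAs (Decidable (_ ∨ _))

theorem TripleHasEdge.mono {H₀ H : SimpleGraph V} (hle : H₀ ≤ H) {t : V × V × V}
    (ht : TripleHasEdge H₀ t) : TripleHasEdge H t :=
  ht.imp (@hle _ _) (Or.imp (@hle _ _) (@hle _ _))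

theorem _root_.List.Triplewise.sublist {p : V → V → V → Prop} {l₁ l₂ : List V}
    (h : l₁.Sublist l₂) (hl : l₂.Triplewise p) : l₁.Triplewise p := by
  induction h with
  | slnil => exact hl
  | cons _ _ ih => exact ih (List.triplewise_cons.1 hl).2
  | cons_cons _ hs ih =>
    obtain ⟨hp, ht⟩ := List.triplewise_cons.1 hl
    exact .cons (hp.sublist hs) (ih ht)

instance _root_.List.decidableTriplewise (p : V → V → V → Prop)
    [∀ a b c, Decidable (p a b c)] : ∀ l : List V, Decidable (l.Triplewise p)
  | [] => isTrue .nil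
  | _ :: l =>
    have := List.decidableTriplewise p l
    decidable_of_iff _ List.triplewise_cons.symm

theorem ncard_le_two_of_triplewise {H : SimpleGraph V} {l : List V}
    (hl : l.Triplewise fun x y z => TripleHasEdge H (x, y, z)) {T : Set V}
    (hTl : T ⊆ {x | x ∈ l}) (hT : IsIndep H T) : T.ncard ≤ 2 := by
  classical
  by_contra! h3
  set t := (l.filter (· ∈ T)).dedup
  have hmem : ∀ x, x ∈ t ↔ x ∈ T := fun x => by
    simpa [t] using fun hx => hTl hx
  have hlen : 3 ≤ t.length := by
    have hTt : T = ↑t.toFinset := by ext x; simp [hmem]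
    rw [hTt, Set.ncard_coe_finset, List.toFinset_card_of_nodup (List.nodup_dedup _)] at h3
    exact h3
  obtain ⟨a, b, c, r, hr⟩ : ∃ a b c r, t = a :: b :: c :: r := by
    match t, hlen with
    | a :: b :: c :: r, _ => exact ⟨a, b, c, r, rfl⟩
  have hsub : [a, b, c].Sublist l := by
    have : [a, b, c].Sublist t := by rw [hr]; simp
    exact this.trans ((List.dedup_sublist _).trans List.filter_sublist)
  have hin : ∀ x ∈ [a, b, c], x ∈ T := by
    intro x hx
    rw [← hmem, hr]
    simp only [List.mem_cons, List.not_mem_nil, or_false] at hx ⊢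
    tauto
  rcases List.triplewise_triple.1 (hl.sublist hsub) with h | h | h
  · exact hT (hin a (by simp)) (hin b (by simp)) (H.ne_of_adj h) h
  · exact hT (hin a (by simp)) (hin c (by simp)) (H.ne_of_adj h) h
  · exact hT (hin b (by simp)) (hin c (by simp)) (H.ne_of_adj h) h

end IndepTriples

def graphOrCompl {V : Type*} : Bool → SimpleGraph V → SimpleGraph V
  | true, H => H
  | false, H => Hᶜ

instance {V : Type*} [DecidableEq V] (b : Bool) (H : SimpleGraph V) [DecidableRel H.Adj] :
    DecidableRel (graphOrCompl b H).Adj :=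
  match b with
  | true => inferInstanceAs (DecidableRel H.Adj)
  | false => inferInstanceAs (DecidableRel Hᶜ.Adj)

theorem graphOrCompl_comap {V W : Type*} (b : Bool) {f : V → W} (hf : f.Injective)
    (H : SimpleGraph W) : graphOrCompl b (H.comap f) = (graphOrCompl b H).comap f := by
  cases b
  · ext x y
    simp [graphOrCompl, hf.ne_iff]
  · rfl

def rotate (i : Fin 5) : V10 ≃ V10 :=
  Equiv.sumCongr (Equiv.addLeft i) (Equiv.addLeft i)

theorem std10_comap_rotate {G : SimpleGraph V10} (hG : Std10 G) (i : Fin 5) :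
    Std10 (G.comap (rotate i)) := by
  obtain ⟨hvv, huv, huv'⟩ := hG
  refine ⟨fun a b => ?_, fun a k h => ?_, fun a => ?_⟩
  · simp [rotate, hvv, add_assoc]
  · simpa [rotate, add_assoc] using huv _ _ h
  · simpa [rotate, add_assoc] using huv' (i + a)

def freeUPairs : List (Fin 5 × Fin 5) :=
  [(0, 2), (0, 3), (1, 2), (1, 3), (1, 4), (2, 3), (2, 4), (3, 4)]

instance (u : List (Fin 5 × Fin 5)) (e : List (Fin 5)) : DecidableRel (graph10 u e).Adj
  | .inl _, .inl _ | .inl _, .inr _ | .inr _, .inl _ | .inr _, .inr _ =>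
    inferInstanceAs (Decidable (_ ∧ _))

theorem graph10_mono {u u' : List (Fin 5 × Fin 5)} {e e' : List (Fin 5)} (hu : u ⊆ u')
    (he : e ⊆ e') : graph10 u e ≤ graph10 u' e' := by
  rintro (a | a) (b | b) ⟨hne, h⟩ <;> refine ⟨hne, ?_⟩ <;> simp only at h ⊢ <;> grind

theorem adj_inr_inl_iff {G : SimpleGraph V10} (hG : Std10 G) (j k : Fin 5) :
    G.Adj (.inr j) (.inl k) ↔ k = j + 2 ∨ k = j + 3 ∨ (G.Adj (.inr j) (.inl j) ∧ k = j) := by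
  refine ⟨fun h => ?_, ?_⟩
  · rcases hG.2.1 j k h with rfl | rfl | rfl <;> simp_all
  · rintro (rfl | rfl | ⟨h, rfl⟩)
    exacts [(hG.2.2 j).1, (hG.2.2 j).2, h]

theorem exists_eq_graph10 {G : SimpleGraph V10} (hG : Std10 G) (h₁ : ¬G.Adj (.inr 0) (.inr 1))
    (h₄ : ¬G.Adj (.inr 0) (.inr 4)) :
    ∃ u ∈ freeUPairs.sublists, ∃ e ∈ (List.finRange 5).sublists, G = graph10 u e := by
  classical
  refine ⟨freeUPairs.filter fun p => G.Adj (.inr p.1) (.inr p.2), by simp,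
    (List.finRange 5).filter fun j => G.Adj (.inr j) (.inl j), by simp, ?_⟩
  ext (a | a) (b | b)
  · simp only [graph10, fromRel_adj, hG.1, ne_eq, Sum.inl.injEq]
    refine ⟨fun h => ⟨?_, h⟩, And.right⟩
    rcases h with rfl | rfl <;> simp
  · rw [G.adj_comm, adj_inr_inl_iff hG]
    simp [graph10]
  · rw [adj_inr_inl_iff hG]
    simp [graph10]
  · have h₁' : ¬G.Adj (.inr 1) (.inr 0) := fun h => h₁ h.symm
    have h₄' : ¬G.Adj (.inr 4) (.inr 0) := fun h => h₄ h.symm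
    fin_cases a <;> fin_cases b <;> simp [graph10, freeUPairs, h₁, h₄, h₁', h₄', G.adj_comm]

/-- For `b = true` the edges, for `b = false` the non-edges, shared by all graphs
`graph10 u e` with `u ⊆ freeUPairs`. -/
def graph10Bound : Bool → SimpleGraph V10
  | true => graph10 [] []
  | false => graph10 freeUPairs (List.finRange 5)

instance (b : Bool) : DecidableRel (graph10Bound b).Adj :=
  match b with
  | true => inferInstanceAs (DecidableRel (graph10 [] []).Adj)
  | false => inferInstanceAs (DecidableRel (graph10 freeUPairs (List.finRange 5)).Adj)

theorem graphOrCompl_graph10Bound_le (b : Bool) {u : List (Fin 5 × Fin 5)} (e : List (Fin 5))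
    (hu : u ∈ freeUPairs.sublists) :
    graphOrCompl b (graph10Bound b) ≤ graphOrCompl b (graph10 u e) := by
  cases b
  · exact compl_le_compl
      (graph10_mono (List.mem_sublists.1 hu).subset fun j _ => List.mem_finRange j)
  · exact graph10_mono (List.nil_subset _) (List.nil_subset _)

/-- `verts` is meant to span no independent triple of `graphOrCompl side (graph10 u e)`;
`residual` lists the triples of `verts` not already ruled out by `graph10Bound side`, which are
the only ones whose status depends on `u` and `e`. -/
structure Certificate where
  side : Bool
  verts : List V10
  residual : List (V10 × V10 × V10)

def certificates : List Certificate :=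
  [⟨false, [.inl 0, .inl 1, .inl 3, .inr 0, .inr 1, .inr 2, .inr 4],
    [(.inl 0, .inr 0, .inr 2), (.inl 1, .inr 1, .inr 4), (.inr 1, .inr 2, .inr 4)]⟩,
  ⟨true, [.inl 0, .inl 1, .inl 4, .inr 1, .inr 2, .inr 3, .inr 4],
    [(.inl 0, .inr 1, .inr 4), (.inl 1, .inr 1, .inr 2), (.inl 4, .inr 3, .inr 4),
     (.inr 1, .inr 2, .inr 3), (.inr 1, .inr 2, .inr 4), (.inr 1, .inr 3, .inr 4),
     (.inr 2, .inr 3, .inr 4)]⟩,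
  ⟨false, [.inl 0, .inl 2, .inl 4, .inr 0, .inr 1, .inr 3, .inr 4],
    [(.inl 0, .inr 0, .inr 3), (.inl 4, .inr 1, .inr 4), (.inr 1, .inr 3, .inr 4)]⟩,
  ⟨true, [.inl 0, .inl 1, .inl 2, .inr 0, .inr 2, .inr 3, .inr 4],
    [(.inl 0, .inr 0, .inr 4), (.inl 1, .inr 0, .inr 2), (.inl 2, .inr 2, .inr 3),
     (.inr 0, .inr 2, .inr 3), (.inr 0, .inr 2, .inr 4), (.inr 0, .inr 3, .inr 4),
     (.inr 2, .inr 3, .inr 4)]⟩,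
  ⟨false, [.inl 0, .inl 2, .inl 3, .inr 1, .inr 2, .inr 3, .inr 4],
    [(.inl 0, .inr 2, .inr 3), (.inl 2, .inr 2, .inr 4), (.inl 3, .inr 1, .inr 3),
     (.inr 1, .inr 2, .inr 3), (.inr 1, .inr 2, .inr 4), (.inr 1, .inr 3, .inr 4),
     (.inr 2, .inr 3, .inr 4)]⟩,
  ⟨true, [.inl 0, .inl 3, .inl 4, .inr 0, .inr 1, .inr 2, .inr 3],
    [(.inl 0, .inr 0, .inr 1), (.inl 3, .inr 2, .inr 3), (.inl 4, .inr 0, .inr 3),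
     (.inr 0, .inr 1, .inr 2), (.inr 0, .inr 1, .inr 3), (.inr 0, .inr 2, .inr 3),
     (.inr 1, .inr 2, .inr 3)]⟩,
  ⟨false, [.inl 1, .inl 2, .inl 4, .inr 0, .inr 1, .inr 2, .inr 3],
    [(.inl 1, .inr 1, .inr 3), (.inl 2, .inr 0, .inr 2), (.inl 4, .inr 1, .inr 2),
     (.inr 0, .inr 2, .inr 3), (.inr 1, .inr 2, .inr 3)]⟩,
  ⟨false, [.inl 1, .inl 3, .inl 4, .inr 0, .inr 2, .inr 3, .inr 4],
    [(.inl 1, .inr 3, .inr 4), (.inl 3, .inr 0, .inr 3), (.inl 4, .inr 2, .inr 4),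
     (.inr 0, .inr 2, .inr 3), (.inr 2, .inr 3, .inr 4)]⟩,
  ⟨true, [.inl 1, .inl 2, .inl 3, .inr 0, .inr 1, .inr 3, .inr 4],
    [(.inl 1, .inr 0, .inr 1), (.inl 2, .inr 1, .inr 3), (.inl 3, .inr 3, .inr 4),
     (.inr 0, .inr 1, .inr 3), (.inr 0, .inr 1, .inr 4), (.inr 0, .inr 3, .inr 4),
     (.inr 1, .inr 3, .inr 4)]⟩,
  ⟨true, [.inl 2, .inl 3, .inl 4, .inr 0, .inr 1, .inr 2, .inr 4],
    [(.inl 2, .inr 1, .inr 2), (.inl 3, .inr 2, .inr 4), (.inl 4, .inr 0, .inr 4),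
     (.inr 0, .inr 1, .inr 2), (.inr 0, .inr 1, .inr 4), (.inr 0, .inr 2, .inr 4),
     (.inr 1, .inr 2, .inr 4)]⟩]

theorem certificates_valid : ∀ c ∈ certificates, c.verts.Nodup ∧ c.verts.length = 7 ∧
    c.verts.Triplewise fun x y z => TripleHasEdge (graphOrCompl c.side (graph10Bound c.side))
      (x, y, z) ∨ ∃ t ∈ c.residual, t = (x, y, z) := by
  decide +kernel

theorem certificates_cover : ∀ u ∈ freeUPairs.sublists, ∀ e ∈ (List.finRange 5).sublists,
    ∃ c ∈ certificates, ∀ t ∈ c.residual, TripleHasEdge (graphOrCompl c.side (graph10 u e)) t := by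
  decide +kernel

theorem exists_graphOrCompl_graph10_indep_le_two {u : List (Fin 5 × Fin 5)} {e : List (Fin 5)}
    (hu : u ∈ freeUPairs.sublists) (he : e ∈ (List.finRange 5).sublists) :
    ∃ (b : Bool) (l : List V10), l.Nodup ∧ l.length = 7 ∧
      ∀ T ⊆ {x | x ∈ l}, IsIndep (graphOrCompl b (graph10 u e)) T → T.ncard ≤ 2 := by
  obtain ⟨c, hc, hres⟩ := certificates_cover u hu e he
  obtain ⟨hnd, hlen, hfix⟩ := certificates_valid c hc
  refine ⟨c.side, c.verts, hnd, hlen, fun T hT => ncard_le_two_of_triplewise ?_ hT⟩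
  refine hfix.imp fun {x y z} h => ?_
  rcases h with h | ⟨t, ht, rfl⟩
  · exact h.mono (graphOrCompl_graph10Bound_le c.side e hu)
  · exact hres _ ht

theorem exists_graphOrCompl_indep_le_two {G : SimpleGraph V10} (hG : Std10 G) (i : Fin 5)
    (h₁ : ¬G.Adj (.inr i) (.inr (i - 1))) (h₂ : ¬G.Adj (.inr i) (.inr (i + 1))) :
    ∃ (b : Bool) (S : Set V10), S.ncard = 7 ∧
      ∀ T ⊆ S, IsIndep (graphOrCompl b G) T → T.ncard ≤ 2 := by
  have h₄ : ¬(G.comap (rotate i)).Adj (.inr 0) (.inr 4) := by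
    rw [sub_eq_add_neg, show (-1 : Fin 5) = 4 from rfl] at h₁
    simpa [rotate] using h₁
  obtain ⟨u, hu, e, he, hG'⟩ :=
    exists_eq_graph10 (std10_comap_rotate hG i) (by simpa [rotate] using h₂) h₄
  obtain ⟨b, l, hnd, hlen, hα⟩ := exists_graphOrCompl_graph10_indep_le_two hu he
  refine ⟨b, rotate i '' {x | x ∈ l}, ?_, fun T hT hind => ?_⟩
  · rw [Set.ncard_image_of_injective _ (rotate i).injective, ← hlen, ← List.coe_toFinset,
      Set.ncard_coe_finset, List.toFinset_card_of_nodup hnd]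
  · rw [← Set.ncard_preimage_of_injective_subset_range (rotate i).injective
      (hT.trans (Set.image_subset_range _ _))]
    refine hα _ (fun x hx => ?_) ?_
    · simpa using hT hx
    · rw [← hG', graphOrCompl_comap b (rotate i).injective]
      exact fun x hx y hy hne => hind hx hy ((rotate i).injective.ne hne)

/-- if both `G` and its complement are minimally t-imperfect (standard
10-vertex labeling), then for every `i` at least one of `u_iu_{i-1}` and
`u_iu_{i+1}` is an edge. -/
theorem stmt16 (G : SimpleGraph V10)
    (hG : MinimallyTImperfect G) (hGc : MinimallyTImperfect Gᶜ)
    (hstd : Std10 G) :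
    ∀ i : Fin 5, G.Adj (.inr i) (.inr (i - 1)) ∨ G.Adj (.inr i) (.inr (i + 1)) := by
  intro i
  by_contra! h
  obtain ⟨b, S, hS, hα⟩ := exists_graphOrCompl_indep_le_two hstd i h.1 h.2
  have hSu : S ≠ Set.univ := by
    rintro rfl
    simp [Set.ncard_univ] at hS
  cases b
  · exact not_forall_tPerfect_of_indep_ncard_le Gᶜ hSu 2 (by omega) hα hGc.2
  · exact not_forall_tPerfect_of_indep_ncard_le G hSu 2 (by omega) hα hG.2

end TP
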